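/- arXiv:2503.01618 — 3 statements merged into one kernel-verified Lean document; each statement's English description precedes it below -/
import Mathlib

section
/- Energy dissipation law for the SAV reformulation: suppose (φ, r, μ) satisfies the SAV system. Then for every t ∈ ℝ, the function t ↦ (1/2)⟨φ(t), L(φ(t))⟩ + r(t)² is differentiable at t and its derivative equals ⟨μ(t), G(μ(t))⟩. -/
open scoped InnerProductSpace

/-!
The energy is `½⟪φ, Lφ⟫ + r²`. Self-adjointness of `L` makes the derivative of the quadratic
part `⟪φ', Lφ⟫`, and the equation for `r'` is chosen exactly so that `2 r r'` equals the
remaining part `(r / √E₁) ⟪U, φ'⟫` of `⟪μ, φ'⟫`. Since `φ' = Gμ`, the sum is `⟪μ, Gμ⟫`.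
-/

section

variable {H : Type*} [NormedAddCommGroup H] [InnerProductSpace ℝ H]

theorem HasDerivAt.inner_apply_self_of_isSelfAdjoint [CompleteSpace H] {L : H →L[ℝ] H}
    (hL : IsSelfAdjoint L) {f : ℝ → H} {f' : H} {t : ℝ} (hf : HasDerivAt f f' t) :
    HasDerivAt (fun s => ⟪f s, L (f s)⟫_ℝ) (2 * ⟪f', L (f t)⟫_ℝ) t := by
  have hLf : HasDerivAt (fun s => L (f s)) (L f') t := L.hasFDerivAt.comp_hasDerivAt t hf
  refine (hf.inner ℝ hLf).congr_deriv ?_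
  have hsymm : ⟪f t, L f'⟫_ℝ = ⟪f', L (f t)⟫_ℝ :=
    (hL.isSymmetric (f t) f').symm.trans (real_inner_comm _ _)
  rw [hsymm]
  ring

theorem real_inner_add_div_smul_eq {v w u : H} {r s : ℝ} (hs : s ≠ 0) :
    ⟪v, w⟫_ℝ + 2 * r * (1 / (2 * s) * ⟪u, v⟫_ℝ) = ⟪w + (r / s) • u, v⟫_ℝ := by
  rw [inner_add_left, real_inner_smul_left, real_inner_comm w, real_inner_comm v]
  field_simp

end

theorem sav_energy_dissipation_general
    {H : Type*} [NormedAddCommGroup H] [InnerProductSpace ℝ H] [CompleteSpace H]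
    (L G : H →L[ℝ] H) (hL : IsSelfAdjoint L)
    (E₁ : H → ℝ) (U : H → H)
    (φ : ℝ → H) (φ' : ℝ → H) (r r' : ℝ → ℝ) (μ : ℝ → H)
    (hφ : ∀ t : ℝ, HasDerivAt φ (φ' t) t)
    (hr : ∀ t : ℝ, HasDerivAt r (r' t) t)
    (hpos : ∀ t : ℝ, 0 < E₁ (φ t))
    (heq_mu : ∀ t : ℝ, φ' t = G (μ t))
    (heq_phi : ∀ t : ℝ, μ t = L (φ t) + (r t / Real.sqrt (E₁ (φ t))) • U (φ t))
    (heq_r : ∀ t : ℝ, r' t = (1 / (2 * Real.sqrt (E₁ (φ t)))) * ⟪U (φ t), φ' t⟫_ℝ) :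
    ∀ t : ℝ,
      HasDerivAt (fun s : ℝ => (1 / 2) * ⟪φ s, L (φ s)⟫_ℝ + (r s) ^ 2)
        (⟪μ t, G (μ t)⟫_ℝ) t := by
  intro t
  have hquad := ((hφ t).inner_apply_self_of_isSelfAdjoint hL).const_mul (1 / 2 : ℝ)
  have hsq : HasDerivAt (fun s => r s ^ 2) (2 * r t * r' t) t := by
    simpa [mul_comm] using (hr t).fun_pow 2
  refine (hquad.add hsq).congr_deriv ?_
  have hsqrt : Real.sqrt (E₁ (φ t)) ≠ 0 := (Real.sqrt_pos.mpr (hpos t)).ne'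
  rw [← heq_mu, heq_r, heq_phi, ← real_inner_add_div_smul_eq hsqrt]
  ring

/-- Energy dissipation law for the SAV reformulation: if `(φ, r, μ)` satisfies the SAV
system, then the modified energy `t ↦ (1/2)⟨φ(t), L(φ(t))⟩ + r(t)²` is differentiable
with derivative `⟨μ(t), G(μ(t))⟩`. -/
theorem sav_energy_dissipation
    {H : Type*} [NormedAddCommGroup H] [InnerProductSpace ℝ H] [CompleteSpace H]
    (L G : H →L[ℝ] H) (hL : IsSelfAdjoint L)
    (E₁ : H → ℝ) (U : H → H) (hU : ∀ ψ : H, HasGradientAt E₁ (U ψ) ψ)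
    (φ : ℝ → H) (φ' : ℝ → H) (r r' : ℝ → ℝ) (μ : ℝ → H)
    (hφ : ∀ t : ℝ, HasDerivAt φ (φ' t) t)
    (hr : ∀ t : ℝ, HasDerivAt r (r' t) t)
    (hpos : ∀ t : ℝ, 0 < E₁ (φ t))
    (heq_mu : ∀ t : ℝ, φ' t = G (μ t))
    (heq_phi : ∀ t : ℝ, μ t = L (φ t) + (r t / Real.sqrt (E₁ (φ t))) • U (φ t))
    (heq_r : ∀ t : ℝ, r' t = (1 / (2 * Real.sqrt (E₁ (φ t)))) * ⟪U (φ t), φ' t⟫_ℝ) :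
    ∀ t : ℝ,
      HasDerivAt (fun s : ℝ => (1 / 2) * ⟪φ s, L (φ s)⟫_ℝ + (r s) ^ 2)
        (⟪μ t, G (μ t)⟫_ℝ) t :=
  sav_energy_dissipation_general L G hL E₁ U φ φ' r r' μ hφ hr hpos heq_mu heq_phi heq_r
end

section
/- Unconditional energy stability of the SAV reformulation: suppose (φ, r, μ) satisfies the SAV system and additionally the operator G is dissipative, i.e. ⟨x, G(x)⟩ ≤ 0 for every x ∈ H. Then the modified energy t ↦ (1/2)⟨φ(t), L(φ(t))⟩ + r(t)² is monotone nonincreasing on ℝ. -/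
/-!
The auxiliary variable `r` evolves so that `2 r r' = (r / √E₁) ⟪U, φ'⟫`, which is exactly the
contribution of the nonlinear part of `μ` to `⟪μ, φ'⟫`. Together with the symmetry of `L` this makes
the derivative of the modified energy equal to `⟪μ, φ'⟫ = ⟪μ, G μ⟫ ≤ 0`.
-/

open scoped InnerProductSpace

section

variable {H : Type*} [NormedAddCommGroup H] [InnerProductSpace ℝ H]

theorem LinearMap.IsSymmetric.hasDerivAt_half_inner_apply {L : H →L[ℝ] H}
    (hL : (L : H →ₗ[ℝ] H).IsSymmetric)
    {φ : ℝ → H} {φ' : H} {t : ℝ} (hφ : HasDerivAt φ φ' t) :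
    HasDerivAt (fun s => (1 / 2) * ⟪φ s, L (φ s)⟫_ℝ) ⟪L (φ t), φ'⟫_ℝ t := by
  refine ((hφ.inner ℝ (L.hasFDerivAt.comp_hasDerivAt t hφ)).const_mul (1 / 2 : ℝ)).congr_deriv ?_
  have hsymm : ⟪φ t, L φ'⟫_ℝ = ⟪L (φ t), φ'⟫_ℝ := (hL (φ t) φ').symm
  rw [Function.comp_apply, hsymm, real_inner_comm φ']
  ring

theorem LinearMap.IsSymmetric.hasDerivAt_half_inner_apply_add_sq {L : H →L[ℝ] H}
    (hL : (L : H →ₗ[ℝ] H).IsSymmetric)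
    {φ : ℝ → H} {φ' : H} {r : ℝ → ℝ} {r' q : ℝ} {u : H} {t : ℝ}
    (hφ : HasDerivAt φ φ' t) (hr : HasDerivAt r r' t) (hr' : r' = 1 / (2 * q) * ⟪u, φ'⟫_ℝ) :
    HasDerivAt (fun s => (1 / 2) * ⟪φ s, L (φ s)⟫_ℝ + r s ^ 2)
      ⟪L (φ t) + (r t / q) • u, φ'⟫_ℝ t := by
  refine ((hL.hasDerivAt_half_inner_apply hφ).add (hr.fun_pow 2)).congr_deriv ?_
  rw [inner_add_left, real_inner_smul_left, hr']
  ring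

end

theorem sav_energy_stability_general
    {H : Type*} [NormedAddCommGroup H] [InnerProductSpace ℝ H] [CompleteSpace H]
    (L G : H →L[ℝ] H) (hL : IsSelfAdjoint L)
    (hG : ∀ x : H, ⟪x, G x⟫_ℝ ≤ 0)
    (E₁ : H → ℝ) (U : H → H)
    (φ : ℝ → H) (φ' : ℝ → H) (r r' : ℝ → ℝ) (μ : ℝ → H)
    (hφ : ∀ t : ℝ, HasDerivAt φ (φ' t) t)
    (hr : ∀ t : ℝ, HasDerivAt r (r' t) t)
    (heq_mu : ∀ t : ℝ, φ' t = G (μ t))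
    (heq_phi : ∀ t : ℝ, μ t = L (φ t) + (r t / Real.sqrt (E₁ (φ t))) • U (φ t))
    (heq_r : ∀ t : ℝ, r' t = (1 / (2 * Real.sqrt (E₁ (φ t)))) * ⟪U (φ t), φ' t⟫_ℝ) :
    Antitone (fun s : ℝ => (1 / 2) * ⟪φ s, L (φ s)⟫_ℝ + (r s) ^ 2) := by
  refine antitone_of_hasDerivAt_nonpos (f' := fun t => ⟪μ t, G (μ t)⟫_ℝ) (fun t => ?_)
    (fun t => hG (μ t))
  have h := hL.isSymmetric.hasDerivAt_half_inner_apply_add_sq (hφ t) (hr t) (heq_r t)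
  rwa [← heq_phi t, heq_mu t] at h

/-- Unconditional energy stability of the SAV reformulation: if `(φ, r, μ)` satisfies the
SAV system and `G` is dissipative (`⟪x, G x⟫ ≤ 0` for all `x`), then the modified energy
`t ↦ (1/2)⟨φ(t), L(φ(t))⟩ + r(t)²` is monotone nonincreasing on `ℝ`. -/
theorem sav_energy_stability
    {H : Type*} [NormedAddCommGroup H] [InnerProductSpace ℝ H] [CompleteSpace H]
    (L G : H →L[ℝ] H) (hL : IsSelfAdjoint L)
    (hG : ∀ x : H, ⟪x, G x⟫_ℝ ≤ 0)
    (E₁ : H → ℝ) (U : H → H) (hU : ∀ ψ : H, HasGradientAt E₁ (U ψ) ψ)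
    (φ : ℝ → H) (φ' : ℝ → H) (r r' : ℝ → ℝ) (μ : ℝ → H)
    (hφ : ∀ t : ℝ, HasDerivAt φ (φ' t) t)
    (hr : ∀ t : ℝ, HasDerivAt r (r' t) t)
    (hpos : ∀ t : ℝ, 0 < E₁ (φ t))
    (heq_mu : ∀ t : ℝ, φ' t = G (μ t))
    (heq_phi : ∀ t : ℝ, μ t = L (φ t) + (r t / Real.sqrt (E₁ (φ t))) • U (φ t))
    (heq_r : ∀ t : ℝ, r' t = (1 / (2 * Real.sqrt (E₁ (φ t)))) * ⟪U (φ t), φ' t⟫_ℝ) :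
    Antitone (fun s : ℝ => (1 / 2) * ⟪φ s, L (φ s)⟫_ℝ + (r s) ^ 2) :=
  sav_energy_stability_general L G hL hG E₁ U φ φ' r r' μ hφ hr heq_mu heq_phi heq_r
end

section
/- Consistency of the SAV reformulation with the gradient flow: let φ : ℝ → H be a differentiable curve with E₁(φ(t)) > 0 for all t that solves the original gradient flow φ'(t) = G(L(φ(t)) + U(φ(t))) for all t. Define r(t) := √(E₁(φ(t))) and μ(t) := L(φ(t)) + (r(t)/√(E₁(φ(t)))) • U(φ(t)). Then r is differentiable and the triple (φ, r, μ) satisfies the SAV system; in particular μ(t) = L(φ(t)) + U(φ(t)) for all t. -/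
open scoped InnerProductSpace

theorem HasGradientAt.hasDerivAt_comp {𝕜 F : Type*} [RCLike 𝕜] [NormedAddCommGroup F]
    [InnerProductSpace 𝕜 F] [CompleteSpace F] {E : F → 𝕜} {g v : F} {γ : 𝕜 → F} {t : 𝕜}
    (hE : HasGradientAt E g (γ t)) (hγ : HasDerivAt γ v t) :
    HasDerivAt (fun s => E (γ s)) ⟪g, v⟫_𝕜 t := by
  have h := (hasGradientAt_iff_hasFDerivAt.mp hE).comp_hasDerivAt t hγ
  simp only [InnerProductSpace.toDual_apply_apply] at h
  exact h

theorem HasGradientAt.hasDerivAt_sqrt_comp {F : Type*} [NormedAddCommGroup F]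
    [InnerProductSpace ℝ F] [CompleteSpace F] {E : F → ℝ} {g v : F} {γ : ℝ → F} {t : ℝ}
    (hE : HasGradientAt E g (γ t)) (hγ : HasDerivAt γ v t) (hE₀ : E (γ t) ≠ 0) :
    HasDerivAt (fun s => √(E (γ s))) (1 / (2 * √(E (γ t))) * ⟪g, v⟫_ℝ) t := by
  simpa only [one_div_mul_eq_div] using (hE.hasDerivAt_comp hγ).sqrt hE₀

theorem sav_consistency_general
    {H : Type*} [NormedAddCommGroup H] [InnerProductSpace ℝ H] [CompleteSpace H]
    (L G : H →L[ℝ] H)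
    (E₁ : H → ℝ) (U : H → H) (hU : ∀ ψ : H, HasGradientAt E₁ (U ψ) ψ)
    (φ : ℝ → H) (φ' : ℝ → H)
    (hφ : ∀ t : ℝ, HasDerivAt φ (φ' t) t)
    (hpos : ∀ t : ℝ, 0 < E₁ (φ t))
    (hflow : ∀ t : ℝ, φ' t = G (L (φ t) + U (φ t)))
    (r : ℝ → ℝ) (hr_def : ∀ t : ℝ, r t = Real.sqrt (E₁ (φ t)))
    (μ : ℝ → H)
    (hμ_def : ∀ t : ℝ, μ t = L (φ t) + (r t / Real.sqrt (E₁ (φ t))) • U (φ t)) :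
    ∀ t : ℝ,
      HasDerivAt r ((1 / (2 * Real.sqrt (E₁ (φ t)))) * ⟪U (φ t), φ' t⟫_ℝ) t ∧
      φ' t = G (μ t) ∧
      μ t = L (φ t) + U (φ t) := by
  intro t
  have hsqrt : √(E₁ (φ t)) ≠ 0 := (Real.sqrt_pos.2 (hpos t)).ne'
  have hμ : μ t = L (φ t) + U (φ t) := by
    rw [hμ_def t, hr_def t, div_self hsqrt, one_smul]
  refine ⟨?_, by rw [hflow t, hμ], hμ⟩
  rw [show r = fun s => √(E₁ (φ s)) from funext hr_def]
  exact (hU (φ t)).hasDerivAt_sqrt_comp (hφ t) (hpos t).ne'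

/-- Consistency of the SAV reformulation with the gradient flow: if `φ` solves the
original gradient flow `φ' = G(Lφ + U(φ))` with `E₁(φ(t)) > 0`, then with
`r(t) := √(E₁(φ(t)))` and `μ(t) := L(φ(t)) + (r(t)/√(E₁(φ(t)))) • U(φ(t))`,
the function `r` is differentiable with the SAV derivative, `(φ, r, μ)` satisfies the
SAV system, and in particular `μ(t) = L(φ(t)) + U(φ(t))` for all `t`. -/
theorem sav_consistency
    {H : Type*} [NormedAddCommGroup H] [InnerProductSpace ℝ H] [CompleteSpace H]
    (L G : H →L[ℝ] H) (hL : IsSelfAdjoint L)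
    (E₁ : H → ℝ) (U : H → H) (hU : ∀ ψ : H, HasGradientAt E₁ (U ψ) ψ)
    (φ : ℝ → H) (φ' : ℝ → H)
    (hφ : ∀ t : ℝ, HasDerivAt φ (φ' t) t)
    (hpos : ∀ t : ℝ, 0 < E₁ (φ t))
    (hflow : ∀ t : ℝ, φ' t = G (L (φ t) + U (φ t)))
    (r : ℝ → ℝ) (hr_def : ∀ t : ℝ, r t = Real.sqrt (E₁ (φ t)))
    (μ : ℝ → H)
    (hμ_def : ∀ t : ℝ, μ t = L (φ t) + (r t / Real.sqrt (E₁ (φ t))) • U (φ t)) :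
    ∀ t : ℝ,
      HasDerivAt r ((1 / (2 * Real.sqrt (E₁ (φ t)))) * ⟪U (φ t), φ' t⟫_ℝ) t ∧
      φ' t = G (μ t) ∧
      μ t = L (φ t) + U (φ t) :=
  sav_consistency_general L G E₁ U hU φ φ' hφ hpos hflow r hr_def μ hμ_def
end
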